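/- arXiv:2502.09344 — 2 statements merged into one kernel-verified Lean document; each statement's English description precedes it below -/
import Mathlib

section
/- Let G be a finite directed graph and b ≥ 1. Conversely, any proper b-fold coloring of G induces a proper coloring of the b-order node splitting graph G'_b: assign to v_i the i-th color (under any fixed enumeration) of the color set of v. -/
open Finset

section SplitColoring

variable {V α : Type*} {b : ℕ} (S : V → Finset α) (hcard : ∀ v, #(S v) = b)

noncomputable def splitColoring : V × Fin b → α :=
  fun p => ((S p.1).equivFinOfCardEq (hcard p.1)).symm p.2

theorem splitColoring_mem (v : V) (i : Fin b) : splitColoring S hcard (v, i) ∈ S v :=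
  (((S v).equivFinOfCardEq (hcard v)).symm i).2

theorem splitColoring_injective (v : V) :
    Function.Injective fun i : Fin b => splitColoring S hcard (v, i) :=
  fun _ _ h => ((S v).equivFinOfCardEq (hcard v)).symm.injective (Subtype.ext h)

theorem splitColoring_ne_of_disjoint {u v : V} (h : Disjoint (S u) (S v)) (i j : Fin b) :
    splitColoring S hcard (u, i) ≠ splitColoring S hcard (v, j) := fun heq =>
  disjoint_left.mp h (splitColoring_mem S hcard u i) (heq ▸ splitColoring_mem S hcard v j)

end SplitColoring

theorem stmt_8_general {V α : Type*}
    (G : V → V → Prop) (b : ℕ)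
    (S : V → Finset α) (hcard : ∀ v, (S v).card = b)
    (hdisj : ∀ u v : V, G u v ∨ G v u → Disjoint (S u) (S v)) :
    ∃ c : V × Fin b → α,
      (∀ v : V, ∀ i : Fin b, c (v, i) ∈ S v) ∧
      (∀ p q : V × Fin b,
        (G p.1 q.1 ∨ (p.1 = q.1 ∧ p.2 ≠ q.2)) → c p ≠ c q) := by
  refine ⟨splitColoring S hcard, splitColoring_mem S hcard, ?_⟩
  rintro ⟨u, i⟩ ⟨v, j⟩ (hadj | ⟨rfl, hij⟩)
  · exact splitColoring_ne_of_disjoint S hcard (hdisj u v (Or.inl hadj)) i j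
  · exact (splitColoring_injective S hcard u).ne hij

/-- Any proper `b`-fold coloring of a directed graph `G` (each vertex receives a
`b`-element color set, adjacent vertices in either direction receive disjoint sets)
induces a proper coloring of the `b`-order node splitting graph `G'_b`: one can
assign to each split node `(v, i)` a color from the color set of `v` so that
adjacent split nodes receive distinct colors. -/
theorem stmt_8 {V α : Type*} [Fintype V] [DecidableEq α]
    (G : V → V → Prop) (b : ℕ) (hb : 1 ≤ b)
    (S : V → Finset α) (hcard : ∀ v, (S v).card = b)
    (hdisj : ∀ u v : V, G u v ∨ G v u → Disjoint (S u) (S v)) :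
    ∃ c : V × Fin b → α,
      (∀ v : V, ∀ i : Fin b, c (v, i) ∈ S v) ∧
      (∀ p q : V × Fin b,
        (G p.1 q.1 ∨ (p.1 = q.1 ∧ p.2 ≠ q.2)) → c p ≠ c q) :=
  stmt_8_general G b S hcard hdisj
end

section
/- Let G = (V,E) be a finite directed graph and let f : V → {1,…,m} be a local coloring such that f(i) ≠ f(j) for every edge (i,j) and, for every vertex j, the set {f(i) : i ∈ N⁺(j) ∪ {j}} has cardinality at most C. Let v₁,…,v_m ∈ Fᶜ be vectors such that every C-subset is linearly independent. Then for every vertex j: dim span{v_{f(i)} : i ∈ N⁺(j) ∪ {j}} − dim span{v_{f(i)} : i ∈ N⁺(j)} = 1. -/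
/-! A proper coloring puts `f j` outside the colors of the in-neighbours of `j`, so the closed
in-neighbourhood carries exactly one color more than the open one, and both color sets have at
most `C` elements. Vectors in general position are linearly independent on every set of at most
`C` indices, so the dimension of the span of the vectors indexed by such a set is its size. -/

open Module Submodule

section

variable {K M ι : Type*} [DivisionRing K] [AddCommGroup M] [Module K M] {v : ι → M}

theorem LinearIndepOn.finrank_span_image {s : Set ι} (hs : s.Finite) (hli : LinearIndepOn K v s) :
    finrank K (span K (v '' s)) = s.ncard := by
  have : Fintype (v '' s) := (hs.image v).fintype
  rw [finrank_span_set_eq_card hli.id_image, ← Set.ncard_eq_toFinset_card',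
    hli.injOn.ncard_image]

theorem LinearIndepOn.finrank_span_image_insert_sub {a : ι} {s : Set ι} (hs : s.Finite)
    (ha : a ∉ s) (hli : LinearIndepOn K v (insert a s)) :
    finrank K (span K (v '' insert a s)) - finrank K (span K (v '' s)) = 1 := by
  rw [hli.finrank_span_image (hs.insert a),
    (hli.mono (Set.subset_insert a s)).finrank_span_image hs, Set.ncard_insert_of_notMem ha hs]
  omega

theorem linearIndepOn_of_ncard_le [Fintype ι] {C : ℕ} (hC : C ≤ Fintype.card ι)
    (hgen : ∀ s : Finset ι, s.card = C → LinearIndependent K (fun i : s => v i))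
    {s : Set ι} (hs : s.ncard ≤ C) : LinearIndepOn K v s := by
  lift s to Finset ι using s.toFinite
  obtain ⟨t, hst, htC⟩ := Finset.exists_superset_card_eq (by simpa using hs) hC
  exact LinearIndepOn.mono (hgen t htC) (by exact_mod_cast hst)

end

theorem stmt_15_general {F : Type*} [Field F] {V : Type*}
    (E : V → V → Prop)
    (C m : ℕ) (hCm : C ≤ m)
    (f : V → Fin m)
    (hproper : ∀ i j : V, E i j → f i ≠ f j)
    (hlocal : ∀ j : V, (f '' insert j {i | E i j}).ncard ≤ C)
    (v : Fin m → Fin C → F)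
    (hgen : ∀ s : Finset (Fin m), s.card = C →
      LinearIndependent F (fun i : s => v i)) :
    ∀ j : V,
      Module.finrank F
          ↥(Submodule.span F ((fun i => v (f i)) '' insert j {i | E i j}))
        - Module.finrank F
          ↥(Submodule.span F ((fun i => v (f i)) '' {i | E i j})) = 1 := by
  intro j
  have hfresh : f j ∉ f '' {i | E i j} := fun ⟨i, hij, hfi⟩ => hproper i j hij hfi
  have hlocal_j : (insert (f j) (f '' {i | E i j})).ncard ≤ C := by
    simpa only [Set.image_insert_eq] using hlocal j
  rw [← Set.image_image v f, ← Set.image_image v f, Set.image_insert_eq]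
  have hli := linearIndepOn_of_ncard_le (by simpa using hCm) hgen hlocal_j
  exact hli.finrank_span_image_insert_sub (Set.toFinite _) hfresh

/-- A local coloring `f` of a finite loopless directed graph (distinct indices on
edges, at most `C` distinct indices on each closed in-neighborhood), combined with
vectors `v₁,…,vₘ ∈ Fᶜ` in general position (every `C`-subset linearly independent),
yields a one-to-one scalar IA scheme: for every vertex `j`,
`dim span(closed in-neighborhood) − dim span(in-neighborhood) = 1`. -/
theorem stmt_15 {F : Type*} [Field F] {V : Type*} [Fintype V]
    (E : V → V → Prop) (hloop : ∀ i, ¬ E i i)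
    (C m : ℕ) (hCm : C ≤ m)
    (f : V → Fin m)
    (hproper : ∀ i j : V, E i j → f i ≠ f j)
    (hlocal : ∀ j : V, (f '' insert j {i | E i j}).ncard ≤ C)
    (v : Fin m → Fin C → F)
    (hgen : ∀ s : Finset (Fin m), s.card = C →
      LinearIndependent F (fun i : s => v i)) :
    ∀ j : V,
      Module.finrank F
          ↥(Submodule.span F ((fun i => v (f i)) '' insert j {i | E i j}))
        - Module.finrank F
          ↥(Submodule.span F ((fun i => v (f i)) '' {i | E i j})) = 1 :=
  stmt_15_general E C m hCm f hproper hlocal v hgen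
end
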